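/- Let p ≠ q be primes, let f be the multiplicative order of p modulo q, and define the trace polynomial T_q(X) = ∑_{j=0}^{f−1} X^{p^j} over 𝔽_p. If gcd(Φ_q, T_q) is nonconstant in 𝔽_p[X], then X^q − 1 factors nontrivially in 𝔽_p[X;M], where M = ⟨2,3⟩. -/

import Mathlib

/-!
Let `d` be the monic gcd of `Φ_q` and `T_q`. Every monic irreducible factor `P` of `Φ_q` over `𝔽_p`
has degree `f`, so `T_q` evaluated at a root of `P` is the trace of that root, which is
`-P.nextCoeff`; as `P ∣ T_q`, this vanishes. Summing over the irreducible factors of `d` gives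
`d.nextCoeff = 0`. Writing `X^q - 1 = d * e` and reversing, `X^q - 1 = d.reverse * (-e.reverse)`,
where `d.reverse` has constant term `1` and linear coefficient `d.nextCoeff = 0`; comparing linear
coefficients then shows that `-e.reverse` has no linear term either.
-/

open Polynomial UniqueFactorizationMonoid

/-- The subring `𝔽_p[X;M]` of `𝔽_p[X]` (for `M = ⟨2,3⟩`), consisting of
polynomials whose coefficient on `X^1` vanishes. -/
def MRing (p : ℕ) : Subring (Polynomial (ZMod p)) where
  carrier := {f | f.coeff 1 = 0}
  zero_mem' := by simp
  one_mem' := by simp [Polynomial.coeff_one]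
  add_mem' := by
    intro a b ha hb
    simp only [Set.mem_setOf_eq, Polynomial.coeff_add] at *
    simp [ha, hb]
  neg_mem' := by
    intro a ha
    simp only [Set.mem_setOf_eq, Polynomial.coeff_neg] at *
    simp [ha]
  mul_mem' := by
    intro a b ha hb
    simp only [Set.mem_setOf_eq] at *
    rw [Polynomial.coeff_mul, Finset.Nat.sum_antidiagonal_eq_sum_range_succ_mk]
    simp [Finset.sum_range_succ, ha, hb]

namespace Polynomial

theorem algebraMap_neg_nextCoeff_eq_sum_root_pow {K : Type*} [Field K] [Fintype K] {P : K[X]}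
    (hP : Irreducible P) (hPm : P.Monic) :
    algebraMap K (AdjoinRoot P) (-P.nextCoeff) =
      ∑ i ∈ Finset.range P.natDegree, AdjoinRoot.root P ^ Fintype.card K ^ i := by
  have : Fact (Irreducible P) := ⟨hP⟩
  have := hPm.finite_adjoinRoot
  have : Finite (AdjoinRoot P) := Module.finite_of_finite K
  have hmin : minpoly K (AdjoinRoot.root P) = P := by
    rw [AdjoinRoot.minpoly_root hP.ne_zero, hPm.leadingCoeff, inv_one, C_1, mul_one]
  let pb := AdjoinRoot.powerBasis hP.ne_zero
  have h := FiniteField.algebraMap_trace_eq_sum_pow K (AdjoinRoot P) pb.gen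
  rwa [pb.trace_gen_eq_nextCoeff_minpoly, pb.finrank, AdjoinRoot.powerBasis_dim,
    AdjoinRoot.powerBasis_gen, hmin, Nat.card_eq_fintype_card] at h

theorem Monic.nextCoeff_eq_zero_of_forall_irreducible_dvd {K : Type*} [Field K] {d : K[X]}
    (hd : d.Monic) (h : ∀ P : K[X], Irreducible P → P.Monic → P ∣ d → P.nextCoeff = 0) :
    d.nextCoeff = 0 := by
  classical
  have hmonic : ∀ P ∈ normalizedFactors d, P.Monic := fun P hP => by
    rw [← normalize_normalized_factor P hP]
    exact monic_normalize (ne_zero_of_mem_normalizedFactors hP)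
  rw [← hd.normalize_eq_self, ← prod_normalizedFactors_eq hd.ne_zero,
    ← (normalizedFactors d).map_id, Monic.nextCoeff_multiset_prod _ id hmonic]
  refine Multiset.sum_eq_zero fun c hc => ?_
  obtain ⟨P, hP, rfl⟩ := Multiset.mem_map.mp hc
  exact h P (irreducible_of_normalized_factor P hP) (hmonic P hP)
    (dvd_of_mem_normalizedFactors hP)

theorem natDegree_X_pow_sub_one {R : Type*} [Ring R] [Nontrivial R] (n : ℕ) :
    (X ^ n - 1 : R[X]).natDegree = n := by
  simpa using natDegree_X_pow_sub_C (n := n) (r := (1 : R))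

theorem reverse_X_pow_sub_one {R : Type*} [CommRing R] [Nontrivial R] (n : ℕ) :
    (X ^ n - 1 : R[X]).reverse = 1 - X ^ n := by
  rw [reverse, natDegree_X_pow_sub_one, reflect_sub, reflect_one, reflect_monomial, revAt_le le_rfl, Nat.sub_self,
    pow_zero]

theorem exists_mul_eq_X_pow_sub_one_of_nextCoeff_eq_zero {R : Type*} [CommRing R] [IsDomain R]
    {n : ℕ} (hn : 2 ≤ n) {d : R[X]} (hd : d.Monic) (hdn : d ∣ X ^ n - 1)
    (hnext : d.nextCoeff = 0) (hpos : 0 < d.natDegree) (hlt : d.natDegree < n) :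
    ∃ A B : R[X], A.coeff 1 = 0 ∧ B.coeff 1 = 0 ∧ 0 < A.natDegree ∧ 0 < B.natDegree ∧
      X ^ n - 1 = A * B := by
  obtain ⟨e, he⟩ := hdn
  have hXn0 : (X ^ n - 1 : R[X]) ≠ 0 := by
    simpa using X_pow_sub_C_ne_zero (R := R) (by omega : 0 < n) 1
  have hd0 : d.coeff 0 ≠ 0 := by
    intro h0
    have := congrArg (eval 0) he
    rw [coeff_zero_eq_eval_zero] at h0
    simp [h0, zero_pow (by omega : n ≠ 0)] at this
  have hAB : X ^ n - 1 = d.reverse * -e.reverse := by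
    rw [mul_neg, ← reverse_mul_of_domain, ← he, reverse_X_pow_sub_one, neg_sub]
  have hA0 : d.reverse.coeff 0 = 1 := by rw [coeff_zero_reverse, hd.leadingCoeff]
  have hA1 : d.reverse.coeff 1 = 0 := by rw [coeff_one_reverse, hnext]
  have hB1 : (-e.reverse).coeff 1 = 0 := by
    have h1 : (X ^ n - 1 : R[X]).coeff 1 = 0 := by
      simp [coeff_one, coeff_X_pow, show 1 ≠ n by omega]
    rwa [hAB, mul_coeff_one, hA0, hA1, one_mul, zero_mul, add_zero] at h1
  have hAdeg : d.reverse.natDegree = d.natDegree := by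
    rw [reverse_natDegree, natTrailingDegree_eq_zero.mpr (Or.inr hd0), Nat.sub_zero]
  have hdeg : d.reverse.natDegree + (-e.reverse).natDegree = n := by
    obtain ⟨hA, hB⟩ := mul_ne_zero_iff.mp (hAB ▸ hXn0)
    rw [← natDegree_mul hA hB, ← hAB, natDegree_X_pow_sub_one]
  exact ⟨d.reverse, -e.reverse, hA1, hB1, by omega, by omega, hAB⟩

end Polynomial

namespace ZMod

theorem natDegree_eq_orderOf_of_irreducible_dvd_cyclotomic {p q : ℕ} [Fact p.Prime]
    (hpq : p.Coprime q) {P : (ZMod p)[X]} (hP : Irreducible P) (hPq : P ∣ cyclotomic q (ZMod p)) :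
    P.natDegree = orderOf (p : ZMod q) := by
  rw [natDegree_of_dvd_cyclotomic_of_irreducible (p := p) (f := 1) (by simp) (by simpa using hpq)
    hPq hP, ← orderOf_units]
  simp

theorem nextCoeff_eq_zero_of_dvd_cyclotomic_of_dvd_trace {p q : ℕ} [Fact p.Prime]
    (hpq : p.Coprime q) {d : (ZMod p)[X]} (hd : d.Monic) (hdq : d ∣ cyclotomic q (ZMod p))
    (hdT : d ∣ ∑ j ∈ Finset.range (orderOf (p : ZMod q)), (X : (ZMod p)[X]) ^ p ^ j) :
    d.nextCoeff = 0 := by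
  refine hd.nextCoeff_eq_zero_of_forall_irreducible_dvd fun P hP hPm hPd => ?_
  have : Fact (Irreducible P) := ⟨hP⟩
  have h := algebraMap_neg_nextCoeff_eq_sum_root_pow hP hPm
  rw [natDegree_eq_orderOf_of_irreducible_dvd_cyclotomic hpq hP (hPd.trans hdq), ZMod.card] at h
  have hT := AdjoinRoot.aeval_eq (f := P)
    (∑ j ∈ Finset.range (orderOf (p : ZMod q)), (X : (ZMod p)[X]) ^ p ^ j)
  rw [AdjoinRoot.mk_eq_zero.mpr (hPd.trans hdT)] at hT
  simp only [map_sum, map_pow, aeval_X] at hT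
  rw [hT, ← map_zero (algebraMap (ZMod p) (AdjoinRoot P))] at h
  exact neg_eq_zero.mp ((algebraMap (ZMod p) (AdjoinRoot P)).injective h)

end ZMod

theorem MRing.not_isUnit_of_natDegree_pos {p : ℕ} [Fact p.Prime] {g : MRing p}
    (hg : 0 < (g : (ZMod p)[X]).natDegree) : ¬IsUnit g := fun hu =>
  Polynomial.not_isUnit_of_natDegree_pos _ hg (hu.map (MRing p).subtype)

/-- For primes `p ≠ q` and `f` the order of `p` mod `q`, if
`gcd(Φ_q, T_q)` is nonconstant in `𝔽_p[X]` (where `T_q = ∑_{j<f} X^{p^j}`), then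
`X^q - 1` factors nontrivially in `𝔽_p[X;M]`. -/
theorem stmt8 (p q f : ℕ) [Fact p.Prime] (hq : q.Prime) (hpq : p ≠ q)
    (hf : f = orderOf (p : ZMod q))
    (hgcd : 0 < (EuclideanDomain.gcd (Polynomial.cyclotomic q (ZMod p))
      (∑ j ∈ Finset.range f, (X : Polynomial (ZMod p)) ^ p ^ j)).natDegree) :
    ∃ g h : MRing p, ¬ IsUnit g ∧ ¬ IsUnit h ∧
      (X ^ q - 1 : Polynomial (ZMod p)) = (g : Polynomial (ZMod p)) * h := by
  subst hf
  set d := EuclideanDomain.gcd (cyclotomic q (ZMod p))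
    (∑ j ∈ Finset.range (orderOf (p : ZMod q)), (X : (ZMod p)[X]) ^ p ^ j)
  have hd0 : d ≠ 0 := fun h => by simp [h] at hgcd
  have hdq : normalize d ∣ cyclotomic q (ZMod p) :=
    (normalize_associated d).dvd.trans (EuclideanDomain.gcd_dvd_left _ _)
  have hdT := (normalize_associated d).dvd.trans (EuclideanDomain.gcd_dvd_right _ _)
  have hdeg : (normalize d).natDegree = d.natDegree := natDegree_eq_of_degree_eq degree_normalize
  have hpq' : p.Coprime q := (Nat.coprime_primes Fact.out hq).mpr hpq
  have hlt : (normalize d).natDegree < q := by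
    have := natDegree_le_of_dvd hdq (cyclotomic_ne_zero q (ZMod p))
    rw [natDegree_cyclotomic, Nat.totient_prime hq] at this
    exact this.trans_lt (Nat.sub_lt hq.pos one_pos)
  obtain ⟨A, B, hA1, hB1, hA, hB, hAB⟩ :=
    exists_mul_eq_X_pow_sub_one_of_nextCoeff_eq_zero hq.two_le (monic_normalize hd0)
      (hdq.trans (cyclotomic.dvd_X_pow_sub_one q (ZMod p)))
      (ZMod.nextCoeff_eq_zero_of_dvd_cyclotomic_of_dvd_trace hpq' (monic_normalize hd0) hdq hdT)
      (hdeg ▸ hgcd) hlt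
  exact ⟨⟨A, hA1⟩, ⟨B, hB1⟩, MRing.not_isUnit_of_natDegree_pos hA,
    MRing.not_isUnit_of_natDegree_pos hB, hAB⟩
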